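/- arXiv:2505.00829 — 4 statements merged into one kernel-verified Lean document; each statement's English description precedes it below -/
import Mathlib

section
/- Let C be a finite cyclic group of order n acting on a finite set S, and let T, m be positive integers with T ∣ m, m ∣ n, and m/T squarefree. Then Σ_{d : T ∣ d ∣ m} (−1)^{Ω(m·d)} · M_d = (∏_{q prime, q ∣ m/T} (q − 1)) · Σ_{d : (m/T)·f_{m/T}(T) ∣ d, d ∣ n} gcd(T, d) · a_d, where the first sum runs over divisors d of m divisible by T and the second over divisors d of n divisible by (m/T)·f_{m/T}(T). -/
/-!
A `C`-orbit of size `e` is `C ⧸ C^e`, on which `C^d` has `[C : C^d C^e] = gcd(d, e)` orbits; hence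
`M_d = ∑_{e ∣ n} gcd(d, e) a_e`, and it remains to evaluate `∑_{T ∣ d ∣ m} (-1)^{Ω(m d)} gcd(d, e)`
for each `e`. Writing `m = T k` and `d = T u`, the sign is `μ(k) μ(u)` and
`gcd(T u, e) = gcd(T, e) gcd(u, x)` with `x = e / gcd(T, e)`. As `u ↦ gcd(u, x)` is multiplicative,
the sum over `u ∣ k` is `gcd(T, e) ∏_{p ∣ k} (gcd(p, x) - 1)`, which vanishes unless `k ∣ x`,
that is, unless `k f_k(T) ∣ e`.
-/

/-- The subgroup `C^m` of `m`-th powers of a (cyclic, hence commutative) group `C`. -/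
def powSubgroup (C : Type*) [CommGroup C] (m : ℕ) : Subgroup C :=
  (powMonoidHom m : C →* C).range

/-- `M_m`: the number of orbits of `C^m` on `S`. -/
noncomputable def numPowOrbits (C S : Type*) [CommGroup C] [MulAction C S] (m : ℕ) : ℕ :=
  Nat.card (MulAction.orbitRel.Quotient (powSubgroup C m) S)

/-- `a_d`: the number of `C`-orbits in `S` of cardinality `d`. -/
noncomputable def numOrbitsOfCard (C S : Type*) [Group C] [MulAction C S] (d : ℕ) : ℕ :=
  Nat.card {ω : MulAction.orbitRel.Quotient C S // Nat.card ω.orbit = d}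

/-- `Ω`: the number of prime factors counted with multiplicity. -/
def bigOmega (n : ℕ) : ℕ := n.primeFactorsList.length

/-- `f_k(t) = ∏_{p prime, p ∣ gcd(k,t)} p^{v_p(t)}`. -/
def fFun (k t : ℕ) : ℕ := ∏ p ∈ (Nat.gcd k t).primeFactors, p ^ (t.factorization p)

open Finset ArithmeticFunction
open scoped ArithmeticFunction.Moebius ArithmeticFunction.Omega

lemma bigOmega_eq_cardFactors (n : ℕ) : bigOmega n = Ω n := cardFactors_apply.symm

lemma neg_one_pow_bigOmega_mul_mul {T k u : ℕ} (hT : T ≠ 0) (hk : Squarefree k) (hu : u ∣ k) :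
    (-1 : ℤ) ^ bigOmega (T * k * (T * u)) = μ k * μ u := by
  have hk0 : k ≠ 0 := hk.ne_zero
  have hu0 : u ≠ 0 := ne_zero_of_dvd_ne_zero hk0 hu
  rw [bigOmega_eq_cardFactors, cardFactors_mul (mul_ne_zero hT hk0) (mul_ne_zero hT hu0),
    cardFactors_mul hT hk0, cardFactors_mul hT hu0, moebius_apply_of_squarefree hk,
    moebius_apply_of_squarefree (hk.squarefree_of_dvd hu),
    show Ω T + Ω k + (Ω T + Ω u) = 2 * Ω T + (Ω k + Ω u) by ring, pow_add, pow_mul]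
  simp [pow_add]

lemma moebius_eq_neg_one_pow_card_primeFactors {k : ℕ} (hk : Squarefree k) :
    μ k = (-1) ^ #k.primeFactors := by
  rw [moebius_apply_of_squarefree hk,
    ← (cardDistinctFactors_eq_cardFactors_iff_squarefree hk.ne_zero).2 hk,
    cardDistinctFactors_apply, ← List.card_toFinset]
  rfl

lemma Nat.gcd_mul_eq_gcd_mul_gcd_div_gcd (a b e : ℕ) :
    (a * b).gcd e = a.gcd e * b.gcd (e / a.gcd e) := by
  rcases (a.gcd e).eq_zero_or_pos with h | h
  · obtain ⟨rfl, rfl⟩ := Nat.gcd_eq_zero_iff.1 h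
    simp
  calc (a * b).gcd e = (a.gcd e * (a / a.gcd e * b)).gcd (a.gcd e * (e / a.gcd e)) := by
        rw [← mul_assoc, Nat.mul_div_cancel' (Nat.gcd_dvd_left a e),
          Nat.mul_div_cancel' (Nat.gcd_dvd_right a e)]
    _ = a.gcd e * b.gcd (e / a.gcd e) := by
        rw [Nat.gcd_mul_left, (Nat.coprime_div_gcd_div_gcd h).gcd_mul_left_cancel]

lemma Nat.sum_divisors_filter_dvd_mul {M : Type*} [AddCommMonoid M] {T : ℕ} (hT : T ≠ 0)
    (k : ℕ) (f : ℕ → M) :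
    ∑ d ∈ (T * k).divisors.filter (T ∣ ·), f d = ∑ u ∈ k.divisors, f (T * u) := by
  have himage : (T * k).divisors.filter (T ∣ ·) = k.divisors.image (T * ·) := by
    ext d
    simp only [mem_filter, Nat.mem_divisors, mem_image, mul_ne_zero_iff, hT, ne_eq,
      not_false_eq_true, true_and]
    constructor
    · rintro ⟨⟨hd, hk⟩, u, rfl⟩
      exact ⟨u, ⟨(Nat.mul_dvd_mul_iff_left (Nat.pos_of_ne_zero hT)).1 hd, hk⟩, rfl⟩
    · rintro ⟨u, ⟨hu, hk⟩, rfl⟩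
      exact ⟨⟨Nat.mul_dvd_mul_left T hu, hk⟩, dvd_mul_right T u⟩
  rw [himage, sum_image fun _ _ _ _ h => Nat.eq_of_mul_eq_mul_left (Nat.pos_of_ne_zero hT) h]

/-- `u ↦ gcd u x`, except that an arithmetic function must vanish at `0`. -/
def gcdRight (x : ℕ) : ArithmeticFunction ℕ :=
  ⟨fun u => if u = 0 then 0 else u.gcd x, if_pos rfl⟩

lemma gcdRight_apply {x u : ℕ} (hu : u ≠ 0) : gcdRight x u = u.gcd x := if_neg hu

lemma isMultiplicative_gcdRight (x : ℕ) : IsMultiplicative (gcdRight x) := by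
  rw [IsMultiplicative.iff_ne_zero]
  refine ⟨by simp [gcdRight_apply], fun {a b} ha hb hab => ?_⟩
  rw [gcdRight_apply ha, gcdRight_apply hb, gcdRight_apply (mul_ne_zero ha hb), Nat.gcd_comm,
    hab.gcd_mul, Nat.gcd_comm x, Nat.gcd_comm x]

lemma sum_divisors_moebius_mul_gcd {k : ℕ} (hk : Squarefree k) (x : ℕ) :
    ∑ u ∈ k.divisors, μ u * (u.gcd x : ℤ) = ∏ p ∈ k.primeFactors, (1 - (p.gcd x : ℤ)) := by
  have h :=
    ((isMultiplicative_gcdRight x).natCast (R := ℤ)).prodPrimeFactors_one_sub_of_squarefree _ hk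
  simp only [natCoe_apply] at h
  rw [prod_congr rfl fun p hp => by rw [gcdRight_apply (Nat.pos_of_mem_primeFactors hp).ne'],
    sum_congr rfl fun u hu => by rw [gcdRight_apply (Nat.pos_of_mem_divisors hu).ne']] at h
  exact h.symm

lemma prod_primeFactors_gcd_sub_one {k : ℕ} (hk : Squarefree k) (x : ℕ) :
    ∏ p ∈ k.primeFactors, ((p.gcd x : ℤ) - 1) =
      if k ∣ x then ∏ p ∈ k.primeFactors, ((p : ℤ) - 1) else 0 := by
  split_ifs with hkx
  · refine prod_congr rfl fun p hp => ?_
    rw [Nat.gcd_eq_left ((Nat.dvd_of_mem_primeFactors hp).trans hkx)]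
  · obtain ⟨p, hp, hpx⟩ : ∃ p ∈ k.primeFactors, ¬ p ∣ x := by
      by_contra! h
      exact hkx (Nat.prod_primeFactors_of_squarefree hk ▸
        prod_primes_dvd x (fun p hp => (Nat.prime_of_mem_primeFactors hp).prime) h)
    refine prod_eq_zero hp ?_
    rw [((Nat.prime_of_mem_primeFactors hp).coprime_iff_not_dvd.2 hpx).gcd_eq_one]
    simp

lemma fFun_ne_zero (k T : ℕ) : fFun k T ≠ 0 :=
  prod_ne_zero_iff.2 fun _ hq => pow_ne_zero _ (Nat.pos_of_mem_primeFactors hq).ne'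

lemma factorization_fFun (k T p : ℕ) :
    (fFun k T).factorization p = if p ∣ k then T.factorization p else 0 := by
  rw [fFun, Nat.factorization_prod fun q hq => pow_ne_zero _ (Nat.pos_of_mem_primeFactors hq).ne',
    Finsupp.finsetSum_apply, sum_congr rfl fun q hq => by
      rw [(Nat.prime_of_mem_primeFactors hq).factorization_pow, Finsupp.single_apply], sum_ite_eq']
  by_cases hpk : p ∣ k
  · rw [if_pos hpk, ite_eq_left_iff, eq_comm, Nat.factorization_eq_zero_iff]
    simp only [Nat.mem_primeFactors, Nat.dvd_gcd_iff, ne_eq, Nat.gcd_eq_zero_iff]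
    tauto
  · rw [if_neg hpk, if_neg fun h => hpk ((Nat.dvd_of_mem_primeFactors h).trans (k.gcd_dvd_left T))]

lemma mul_fFun_dvd_iff {k T e : ℕ} (hk : Squarefree k) (hT : T ≠ 0) (he : e ≠ 0) :
    k * fFun k T ∣ e ↔ k ∣ e / T.gcd e := by
  have hk0 : k ≠ 0 := hk.ne_zero
  rw [Nat.dvd_div_iff_mul_dvd (Nat.gcd_dvd_right T e), mul_comm (T.gcd e),
    ← Nat.factorization_prime_le_iff_dvd (mul_ne_zero hk0 (fFun_ne_zero k T)) he,
    ← Nat.factorization_prime_le_iff_dvd (mul_ne_zero hk0 (Nat.gcd_ne_zero_left hT)) he]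
  refine forall₂_congr fun p hp => ?_
  rw [Nat.factorization_mul hk0 (fFun_ne_zero k T), Nat.factorization_mul hk0
    (Nat.gcd_ne_zero_left hT), Finsupp.add_apply, Finsupp.add_apply, factorization_fFun,
    Nat.factorization_gcd hT he, Finsupp.inf_apply]
  have hk1 := hk.natFactorization_le_one p
  by_cases hpk : p ∣ k
  · have := (hp.dvd_iff_one_le_factorization hk0).1 hpk
    rw [if_pos hpk]
    omega
  · rw [if_neg hpk, Nat.factorization_eq_zero_of_not_dvd hpk]
    omega

lemma sum_neg_one_pow_bigOmega_mul_gcd {T k e : ℕ} (hT : T ≠ 0) (hk : Squarefree k) (he : e ≠ 0) :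
    ∑ d ∈ (T * k).divisors.filter (T ∣ ·), (-1 : ℤ) ^ bigOmega (T * k * d) * d.gcd e =
      (∏ q ∈ k.primeFactors, ((q : ℤ) - 1)) * if k * fFun k T ∣ e then (T.gcd e : ℤ) else 0 := by
  set x := e / T.gcd e
  rw [Nat.sum_divisors_filter_dvd_mul hT]
  calc ∑ u ∈ k.divisors, (-1 : ℤ) ^ bigOmega (T * k * (T * u)) * ((T * u).gcd e : ℕ)
      = μ k * T.gcd e * ∑ u ∈ k.divisors, μ u * (u.gcd x : ℤ) := by
        rw [mul_sum]
        refine sum_congr rfl fun u hu => ?_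
        rw [neg_one_pow_bigOmega_mul_mul hT hk (Nat.dvd_of_mem_divisors hu),
          Nat.gcd_mul_eq_gcd_mul_gcd_div_gcd]
        push_cast
        ring
    _ = T.gcd e * ∏ p ∈ k.primeFactors, ((p.gcd x : ℤ) - 1) := by
        rw [sum_divisors_moebius_mul_gcd hk, moebius_eq_neg_one_pow_card_primeFactors hk,
          mul_right_comm, ← prod_neg]
        simp_rw [neg_sub]
        ring
    _ = _ := by
        rw [prod_primeFactors_gcd_sub_one hk]
        simp only [mul_fFun_dvd_iff hk hT he]
        split_ifs <;> ring

open MulAction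

lemma MulAction.card_orbitRel_quotient_subgroup_eq_index {G X : Type*} [CommGroup G]
    [MulAction G X] [IsPretransitive G X] (H : Subgroup G) (x : X) :
    Nat.card (orbitRel.Quotient H X) = (H ⊔ stabilizer G x).index := by
  let f : G → orbitRel.Quotient H X := fun g => ⟦g • x⟧
  have hf : Function.Surjective f := fun q => by
    obtain ⟨y, rfl⟩ := Quotient.exists_rep q
    obtain ⟨g, rfl⟩ := exists_smul_eq G x y
    exact ⟨g, rfl⟩
  have hker : Setoid.ker f = QuotientGroup.leftRel (H ⊔ stabilizer G x) := by
    ext g g'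
    rw [Setoid.ker_def, QuotientGroup.leftRel_apply, Subgroup.mem_sup]
    simp only [f, Quotient.eq, orbitRel_apply, mem_orbit_iff, Subgroup.smul_def, Subtype.exists,
      exists_prop, mem_stabilizer_iff]
    constructor
    · rintro ⟨h, hH, hh⟩
      refine ⟨h⁻¹, inv_mem hH, g⁻¹ * (h * g'), ?_, by rw [mul_left_comm, inv_mul_cancel_left]⟩
      rw [mul_smul, mul_smul, hh, inv_smul_smul]
    · rintro ⟨h, hH, s, hs, hhs⟩
      have hg' : g' = g * (h * s) := by rw [hhs, mul_inv_cancel_left]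
      refine ⟨h⁻¹, inv_mem hH, ?_⟩
      rw [← mul_smul, hg', mul_left_comm, inv_mul_cancel_left, mul_smul, hs]
  rw [Subgroup.index, ← Nat.card_congr (Setoid.quotientKerEquivOfSurjective f hf), hker]
  rfl

lemma MulAction.orbitRel.Quotient.card_orbit_dvd_card {G X : Type*} [Group G] [Finite G]
    [MulAction G X] (ω : orbitRel.Quotient G X) : Nat.card ω.orbit ∣ Nat.card G := by
  obtain ⟨y⟩ : Nonempty ω.orbit := ω.nonempty_orbit.to_subtype
  rw [← index_stabilizer_of_transitive G y]
  exact Subgroup.index_dvd_card _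

section PowSubgroup

variable {C : Type*} [CommGroup C]

lemma powSubgroup_le_of_dvd {a b : ℕ} (h : a ∣ b) : powSubgroup C b ≤ powSubgroup C a := by
  rintro _ ⟨y, rfl⟩
  obtain ⟨c, rfl⟩ := h
  exact ⟨y ^ c, by rw [powMonoidHom_apply, powMonoidHom_apply, ← pow_mul, mul_comm]⟩

lemma powSubgroup_sup_powSubgroup (a b : ℕ) :
    powSubgroup C a ⊔ powSubgroup C b = powSubgroup C (a.gcd b) := by
  refine le_antisymm (sup_le (powSubgroup_le_of_dvd (a.gcd_dvd_left b))
    (powSubgroup_le_of_dvd (a.gcd_dvd_right b))) ?_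
  rintro _ ⟨y, rfl⟩
  have bezout : powMonoidHom (a.gcd b) y = (y ^ a.gcdA b) ^ a * (y ^ a.gcdB b) ^ b := by
    rw [powMonoidHom_apply, ← zpow_natCast, Nat.gcd_eq_gcd_ab, zpow_add, zpow_mul', zpow_mul',
      zpow_natCast, zpow_natCast]
  rw [bezout]
  exact Subgroup.mul_mem_sup ⟨_, rfl⟩ ⟨_, rfl⟩

variable [IsCyclic C] [Finite C]

lemma IsCyclic.index_powSubgroup (d : ℕ) : (powSubgroup C d).index = (Nat.card C).gcd d :=
  IsCyclic.index_powMonoidHom_range (G := C) d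

lemma IsCyclic.powSubgroup_index (K : Subgroup C) : powSubgroup C K.index = K := by
  have hle : powSubgroup C K.index ≤ K := by
    rintro _ ⟨y, rfl⟩
    exact K.pow_index_mem y
  have hindex : (powSubgroup C K.index).index = K.index := by
    rw [IsCyclic.index_powSubgroup, Nat.gcd_eq_right K.index_dvd_card]
  refine le_antisymm hle (Subgroup.relIndex_eq_one.1 ?_)
  have hmul := Subgroup.relIndex_mul_index hle
  rw [hindex] at hmul
  exact (Nat.mul_eq_right Subgroup.index_ne_zero_of_finite).1 hmul

variable {S : Type*} [MulAction C S]

lemma card_orbitRel_quotient_powSubgroup_orbit {d : ℕ} (hd : d ∣ Nat.card C)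
    (ω : orbitRel.Quotient C S) :
    Nat.card (orbitRel.Quotient (powSubgroup C d) ω.orbit) = d.gcd (Nat.card ω.orbit) := by
  obtain ⟨y⟩ : Nonempty ω.orbit := ω.nonempty_orbit.to_subtype
  rw [MulAction.card_orbitRel_quotient_subgroup_eq_index _ y,
    ← IsCyclic.powSubgroup_index (stabilizer C y), index_stabilizer_of_transitive,
    powSubgroup_sup_powSubgroup, IsCyclic.index_powSubgroup,
    Nat.gcd_eq_right ((d.gcd_dvd_left _).trans hd)]

lemma numPowOrbits_eq_sum_gcd_mul_numOrbitsOfCard [Finite S] {d : ℕ} (hd : d ∣ Nat.card C) :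
    numPowOrbits C S d = ∑ e ∈ (Nat.card C).divisors, d.gcd e * numOrbitsOfCard C S e := by
  classical
  have := Fintype.ofFinite (orbitRel.Quotient C S)
  have hmaps (ω : orbitRel.Quotient C S) (_ : ω ∈ univ) :
      Nat.card ω.orbit ∈ (Nat.card C).divisors :=
    Nat.mem_divisors.2 ⟨ω.card_orbit_dvd_card, Nat.card_pos.ne'⟩
  rw [numPowOrbits, Nat.card_congr (equivSubgroupOrbits S (powSubgroup C d)), Nat.card_sigma]
  simp_rw [card_orbitRel_quotient_powSubgroup_orbit hd]
  rw [← sum_fiberwise_of_maps_to hmaps]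
  refine sum_congr rfl fun e _ => ?_
  rw [sum_congr rfl fun ω hω => by rw [(mem_filter.1 hω).2], sum_const,
    smul_eq_mul, mul_comm, numOrbitsOfCard, Nat.card_eq_fintype_card, Fintype.card_subtype]

end PowSubgroup

theorem alternating_sum_numPowOrbits_general (C S : Type*) [CommGroup C] [IsCyclic C] [Fintype C]
    [Fintype S] [MulAction C S] (n m T : ℕ) (hn : Fintype.card C = n)
    (hTm : T ∣ m) (hm : m ∣ n) (hsf : Squarefree (m / T)) :
    ∑ d ∈ m.divisors.filter (T ∣ ·), (-1 : ℤ) ^ bigOmega (m * d) * numPowOrbits C S d =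
      (∏ q ∈ (m / T).primeFactors, ((q : ℤ) - 1)) *
        ∑ d ∈ n.divisors.filter ((m / T) * fFun (m / T) T ∣ ·),
          (Nat.gcd T d : ℤ) * numOrbitsOfCard C S d := by
  subst hn
  rw [← Nat.card_eq_fintype_card] at hm ⊢
  obtain ⟨k, rfl⟩ := hTm
  have hT : T ≠ 0 := left_ne_zero_of_mul (ne_zero_of_dvd_ne_zero Nat.card_pos.ne' hm)
  rw [Nat.mul_div_cancel_left k (Nat.pos_of_ne_zero hT)] at hsf ⊢
  calc _ = ∑ d ∈ (T * k).divisors.filter (T ∣ ·), ∑ e ∈ (Nat.card C).divisors,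
          (-1 : ℤ) ^ bigOmega (T * k * d) * d.gcd e * numOrbitsOfCard C S e := by
        refine sum_congr rfl fun d hd => ?_
        rw [numPowOrbits_eq_sum_gcd_mul_numOrbitsOfCard
          ((Nat.dvd_of_mem_divisors (mem_filter.1 hd).1).trans hm)]
        push_cast
        simp_rw [mul_sum, mul_assoc]
    _ = ∑ e ∈ (Nat.card C).divisors, (∑ d ∈ (T * k).divisors.filter (T ∣ ·),
          (-1 : ℤ) ^ bigOmega (T * k * d) * d.gcd e) * numOrbitsOfCard C S e := by
        rw [sum_comm]
        simp_rw [sum_mul]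
    _ = _ := by
        rw [mul_sum, sum_filter]
        refine sum_congr rfl fun e he => ?_
        rw [sum_neg_one_pow_bigOmega_mul_gcd hT hsf (Nat.pos_of_mem_divisors he).ne']
        split_ifs <;> ring

/-- Lemma `tr`: for `T ∣ m ∣ n` with `m/T` squarefree,
`∑_{T∣d∣m} (−1)^{Ω(m·d)} M_d
  = (∏_{q ∣ m/T prime} (q−1)) · ∑_{(m/T)·f_{m/T}(T) ∣ d ∣ n} gcd(T,d) a_d`. -/
theorem alternating_sum_numPowOrbits (C S : Type*) [CommGroup C] [IsCyclic C] [Fintype C]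
    [Fintype S] [MulAction C S] (n m T : ℕ) (hn : Fintype.card C = n)
    (hT : 0 < T) (hTm : T ∣ m) (hm : m ∣ n) (hsf : Squarefree (m / T)) :
    ∑ d ∈ m.divisors.filter (T ∣ ·), (-1 : ℤ) ^ bigOmega (m * d) * numPowOrbits C S d =
      (∏ q ∈ (m / T).primeFactors, ((q : ℤ) - 1)) *
        ∑ d ∈ n.divisors.filter ((m / T) * fFun (m / T) T ∣ ·),
          (Nat.gcd T d : ℤ) * numOrbitsOfCard C S d :=
  alternating_sum_numPowOrbits_general C S n m T hn hTm hm hsf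
end

section
/- Let C be a finite cyclic group of order n acting on a finite set S, let m be a divisor of n, and let T = m / rad(m) where rad(m) is the radical of m (so m/T = rad(m) is the maximal squarefree choice). Then Σ_{d : T ∣ d ∣ m} (−1)^{Ω(m·d)} · M_d = T · (∏_{q prime, q ∣ m/T} (q − 1)) · Σ_{d : m ∣ d ∣ n} a_d. Equivalently, N_m = Σ_{d : m ∣ d, d ∣ n} a_d. -/
/-- `rad m`: the radical of `m`, the product of the distinct primes dividing `m`. -/
def rad (m : ℕ) : ℕ := ∏ p ∈ m.primeFactors, p

/-- `N_m = (1/T) · (∑_{T∣d∣m} (−1)^{Ω(m·d)} M_d) / ∏_{q ∣ m/T prime} (q−1)`,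
where `T = m / rad m`. -/
noncomputable def Nfun (C S : Type*) [CommGroup C] [MulAction C S] (m : ℕ) : ℚ :=
  (1 / (m / rad m : ℚ)) *
    (∑ d ∈ m.divisors.filter (m / rad m ∣ ·),
        (-1 : ℚ) ^ bigOmega (m * d) * numPowOrbits C S d) /
      ∏ q ∈ (m / (m / rad m)).primeFactors, ((q : ℚ) - 1)

/-!
A `C`-orbit of size `e` splits into `gcd(e, d)` orbits of `C^d`, so
`M_d = ∑_{e ∣ n} gcd(d, e) a_e`. A divisor `d` of `m` occurs in the alternating sum exactly when
`m / d` is squarefree, and then its sign is `μ(m / d)`; hence the sum equals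
`∑_e a_e ∑_{d ∣ m} μ(m / d) gcd(d, e)`. Since `gcd(·, e)` is the divisor sum of
`k ↦ [k ∣ e] φ(k)`, Möbius inversion evaluates the inner sum to `[m ∣ e] φ(m)`, and
`φ(m) = T ∏_{q ∣ m} (q - 1)`.
-/

open Finset ArithmeticFunction
open scoped ArithmeticFunction.Moebius Nat

lemma rad_pos (m : ℕ) : 0 < rad m :=
  prod_pos fun _ hp => (Nat.prime_of_mem_primeFactors hp).pos

lemma rad_dvd_self (m : ℕ) : rad m ∣ m :=
  Nat.prod_primeFactors_dvd m

lemma squarefree_rad (m : ℕ) : Squarefree (rad m) :=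
  Finset.squarefree_prod_of_pairwise_isCoprime
    (fun _ hp _ hq hpq => Nat.coprime_iff_isRelPrime.1 <|
      (Nat.coprime_primes (Nat.prime_of_mem_primeFactors hp)
        (Nat.prime_of_mem_primeFactors hq)).2 hpq)
    fun _ hp => (Nat.prime_of_mem_primeFactors hp).squarefree

lemma dvd_rad_iff_squarefree {k m : ℕ} (hm : m ≠ 0) (hkm : k ∣ m) :
    k ∣ rad m ↔ Squarefree k := by
  refine ⟨fun h => (squarefree_rad m).squarefree_of_dvd h, fun hk => ?_⟩
  rw [← Nat.prod_primeFactors_of_squarefree hk]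
  exact prod_dvd_prod_of_subset _ _ _ (Nat.primeFactors_mono hkm hm)

lemma squarefree_div_iff_div_rad_dvd {m d : ℕ} (hm : m ≠ 0) (hdm : d ∣ m) :
    Squarefree (m / d) ↔ m / rad m ∣ d := by
  obtain ⟨k, rfl⟩ := hdm
  have hd : d ≠ 0 := left_ne_zero_of_mul hm
  rw [Nat.mul_div_cancel_left _ (Nat.pos_of_ne_zero hd),
    Nat.div_dvd_iff_dvd_mul (rad_dvd_self _) (rad_pos _), mul_comm (rad _),
    Nat.mul_dvd_mul_iff_left (Nat.pos_of_ne_zero hd), dvd_rad_iff_squarefree hm (dvd_mul_left k d)]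

lemma moebius_div_eq_ite {m d : ℕ} (hm : m ≠ 0) (hdm : d ∣ m) :
    μ (m / d) = if m / rad m ∣ d then (-1) ^ bigOmega (m * d) else 0 := by
  split_ifs with h
  · have hd : d ≠ 0 := ne_zero_of_dvd_ne_zero hm hdm
    have hmd : m / d ≠ 0 := (Nat.div_pos (Nat.le_of_dvd (Nat.pos_of_ne_zero hm) hdm)
      (Nat.pos_of_ne_zero hd)).ne'
    have hsplit : m * d = m / d * (d * d) := by rw [← mul_assoc, Nat.div_mul_cancel hdm]
    rw [moebius_apply_of_squarefree ((squarefree_div_iff_div_rad_dvd hm hdm).2 h), bigOmega,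
      ← cardFactors_apply, hsplit, cardFactors_mul hmd (mul_ne_zero hd hd),
      cardFactors_mul hd hd, ← two_mul, pow_add, pow_mul]
    simp
  · exact moebius_eq_zero_of_not_squarefree (mt (squarefree_div_iff_div_rad_dvd hm hdm).1 h)

lemma sum_sign_mul_eq_sum_moebius_mul {R : Type*} [CommRing R] (m : ℕ) (f : ℕ → R) :
    ∑ d ∈ m.divisors.filter (m / rad m ∣ ·), (-1) ^ bigOmega (m * d) * f d =
      ∑ d ∈ m.divisors, (μ (m / d) : R) * f d := by
  rcases eq_or_ne m 0 with rfl | hm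
  · simp
  rw [sum_filter]
  refine sum_congr rfl fun d hd => ?_
  rw [moebius_div_eq_ite hm (Nat.dvd_of_mem_divisors hd)]
  split_ifs <;> simp

lemma divisors_gcd {d e : ℕ} (hd : d ≠ 0) :
    (d.gcd e).divisors = d.divisors.filter (· ∣ e) := by
  ext k
  simp [Nat.dvd_gcd_iff, hd, and_comm]

lemma sum_moebius_mul_gcd (m e : ℕ) :
    ∑ d ∈ m.divisors, (μ (m / d) : ℤ) * d.gcd e = if m ∣ e then (φ m : ℤ) else 0 := by
  rcases Nat.eq_zero_or_pos m with rfl | hm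
  · simp
  have hgcd (n : ℕ) (hn : 0 < n) :
      ∑ k ∈ n.divisors, (if k ∣ e then (φ k : ℤ) else 0) = n.gcd e := by
    rw [← sum_filter, ← divisors_gcd hn.ne', ← Nat.cast_sum, Nat.sum_totient]
  rw [← Nat.sum_divisorsAntidiagonal' (f := fun a b => (μ a : ℤ) * (b.gcd e : ℤ))]
  exact (sum_eq_iff_sum_mul_moebius_eq (f := fun k => if k ∣ e then (φ k : ℤ) else 0)
    (g := fun n => (n.gcd e : ℤ))).1 hgcd m hm

open MulAction Subgroup

section Orbits

variable {G X : Type*} [Group G] [MulAction G X]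

lemma card_orbit_dvd_card (x : X) : Nat.card (orbit G x) ∣ Nat.card G := by
  rw [Nat.card_coe_set_eq, ← index_stabilizer]
  exact index_dvd_card _

lemma orbit_zpowers_eq_orbit {g : G} (hg : ∀ c, c ∈ zpowers g) (x : X) :
    orbit (zpowers g) x = orbit G x :=
  Set.ext fun _ => ⟨fun ⟨c, hc⟩ => ⟨c, hc⟩, fun ⟨c, hc⟩ => ⟨⟨c, hg c⟩, hc⟩⟩

lemma card_orbit_zpowers (g : G) (x : X) :
    Nat.card (orbit (zpowers g) x) = Function.minimalPeriod (g • ·) x := by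
  rw [Nat.card_congr (orbitZPowersEquiv g x), Nat.card_zmod]

lemma sum_div_card_orbit {R : Type*} [Field R] [CharZero R] [Fintype X]
    [Fintype (orbitRel.Quotient G X)] (F : orbitRel.Quotient G X → R) :
    ∑ x, F (Quotient.mk'' x) / Nat.card (orbit G x) = ∑ ω, F ω := by
  classical
  rw [← sum_fiberwise univ (fun x => (Quotient.mk'' x : orbitRel.Quotient G X))]
  refine sum_congr rfl fun (ω : orbitRel.Quotient G X) _ => ?_
  have hcard : Nat.card ω.orbit = #{x | Quotient.mk'' x = ω} := by
    rw [← Fintype.card_subtype, ← Nat.card_eq_fintype_card]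
    exact Nat.card_congr (Equiv.subtypeEquivRight fun _ => orbitRel.Quotient.mem_orbit)
  have hne : (Nat.card ω.orbit : R) ≠ 0 := by
    have : Nonempty ω.orbit := (orbitRel.Quotient.nonempty_orbit ω).to_subtype
    exact_mod_cast Nat.card_pos.ne'
  calc ∑ x ∈ {x | Quotient.mk'' x = ω}, F (Quotient.mk'' x) / Nat.card (orbit G x)
      = ∑ x ∈ {x | Quotient.mk'' x = ω}, F ω / Nat.card ω.orbit :=
        sum_congr rfl fun x hx => by
          rw [(mem_filter.1 hx).2.symm, orbitRel.Quotient.orbit_mk]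
    _ = F ω := by
        rw [sum_const, nsmul_eq_mul, ← hcard, mul_div_assoc', mul_div_cancel_left₀ _ hne]

end Orbits

section Cyclic

variable {C S : Type*} [CommGroup C] [MulAction C S]

lemma powSubgroup_eq_zpowers {g : C} (hg : ∀ c, c ∈ zpowers g) (d : ℕ) :
    powSubgroup C d = zpowers (g ^ d) := by
  rw [powSubgroup, MonoidHom.range_eq_map, ← (eq_top_iff' _).2 hg, MonoidHom.map_zpowers]
  rfl

lemma card_orbit_powSubgroup [IsCyclic C] [Finite C] (d : ℕ) (x : S) :
    Nat.card (orbit (powSubgroup C d) x) =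
      Nat.card (orbit C x) / (Nat.card (orbit C x)).gcd d := by
  obtain ⟨g, hg⟩ := IsCyclic.exists_generator (α := C)
  have : Finite (orbit (zpowers g) x) := (Set.finite_range _).to_subtype
  have hper : x ∈ Function.periodicPts (g • ·) :=
    Function.minimalPeriod_pos_iff_mem_periodicPts.1 (NeZero.pos _)
  rw [powSubgroup_eq_zpowers hg, ← orbit_zpowers_eq_orbit hg, card_orbit_zpowers,
    card_orbit_zpowers, ← smul_iterate, Function.minimalPeriod_iterate_eq_div_gcd' hper]

lemma numPowOrbits_eq_sum_gcd [IsCyclic C] [Finite C] [Fintype S]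
    [Fintype (orbitRel.Quotient C S)] (d : ℕ) :
    (numPowOrbits C S d : ℚ) =
      ∑ ω : orbitRel.Quotient C S, ((Nat.card ω.orbit).gcd d : ℚ) := by
  have hfib (x : S) : ((Nat.card (orbit C x)).gcd d : ℚ) / Nat.card (orbit C x) =
      1 / Nat.card (orbit (powSubgroup C d) x) := by
    have : Nonempty (orbit C x) := (nonempty_orbit x).to_subtype
    have hne : Nat.card (orbit C x) ≠ 0 := Nat.card_pos.ne'
    rw [card_orbit_powSubgroup,
      Nat.cast_div (Nat.gcd_dvd_left _ _) (Nat.cast_ne_zero.2 (Nat.gcd_ne_zero_left hne))]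
    field_simp
  have := Fintype.ofFinite (orbitRel.Quotient (powSubgroup C d) S)
  rw [numPowOrbits, Nat.card_eq_fintype_card, ← sum_div_card_orbit (G := C)]
  simp only [orbitRel.Quotient.orbit_mk, hfib]
  rw [sum_div_card_orbit (G := powSubgroup C d) (fun _ => (1 : ℚ)), sum_const,
    card_univ, nsmul_one]

lemma numPowOrbits_eq_sum_divisors [IsCyclic C] [Finite C] [Finite S] (d : ℕ) :
    numPowOrbits C S d = ∑ e ∈ (Nat.card C).divisors, d.gcd e * numOrbitsOfCard C S e := by
  have := Fintype.ofFinite S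
  have := Fintype.ofFinite (orbitRel.Quotient C S)
  have hdvd (ω : orbitRel.Quotient C S) : Nat.card ω.orbit ∈ (Nat.card C).divisors := by
    induction ω using Quotient.inductionOn' with | h x => ?_
    rw [orbitRel.Quotient.orbit_mk, Nat.mem_divisors]
    exact ⟨card_orbit_dvd_card x, Nat.card_pos.ne'⟩
  have hgcd : numPowOrbits C S d = ∑ ω : orbitRel.Quotient C S, (Nat.card ω.orbit).gcd d := by
    exact_mod_cast numPowOrbits_eq_sum_gcd d
  rw [hgcd, ← sum_fiberwise_of_maps_to fun ω _ => hdvd ω]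
  refine sum_congr rfl fun e _ => ?_
  rw [sum_congr rfl fun ω hω => by rw [(mem_filter.1 hω).2], sum_const,
    smul_eq_mul, mul_comm, Nat.gcd_comm, numOrbitsOfCard, Nat.card_eq_fintype_card,
    Fintype.card_subtype]

lemma sum_sign_mul_numPowOrbits [IsCyclic C] [Finite C] [Finite S] (m : ℕ) :
    ∑ d ∈ m.divisors.filter (m / rad m ∣ ·),
        (-1 : ℤ) ^ bigOmega (m * d) * numPowOrbits C S d =
      φ m * ∑ e ∈ (Nat.card C).divisors.filter (m ∣ ·), (numOrbitsOfCard C S e : ℤ) := by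
  rw [sum_sign_mul_eq_sum_moebius_mul (f := fun d => (numPowOrbits C S d : ℤ))]
  simp only [numPowOrbits_eq_sum_divisors, Nat.cast_sum, Nat.cast_mul, Int.cast_id, mul_sum]
  rw [sum_comm, sum_filter]
  refine sum_congr rfl fun e _ => ?_
  simp_rw [← mul_assoc, ← sum_mul, sum_moebius_mul_gcd]
  split_ifs <;> simp

end Cyclic

lemma totient_eq_div_rad_mul_prod {R : Type*} [CommRing R] (m : ℕ) :
    (φ m : R) = (m / rad m : ℕ) * ∏ q ∈ (m / (m / rad m)).primeFactors, ((q : R) - 1) := by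
  rcases eq_or_ne m 0 with rfl | hm
  · simp
  rw [Nat.div_div_self (rad_dvd_self m) hm, rad, Nat.primeFactors_prod_primeFactors,
    Nat.totient_eq_div_primeFactors_mul, ← rad]
  push_cast
  rw [prod_congr rfl fun q hq => Nat.cast_sub (Nat.prime_of_mem_primeFactors hq).one_le]
  simp

lemma Nfun_eq_div_totient (C S : Type*) [CommGroup C] [MulAction C S] (m : ℕ) :
    Nfun C S m = (∑ d ∈ m.divisors.filter (m / rad m ∣ ·),
      (-1 : ℚ) ^ bigOmega (m * d) * numPowOrbits C S d) / φ m := by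
  rw [Nfun, totient_eq_div_rad_mul_prod,
    Nat.cast_div (rad_dvd_self m) (Nat.cast_ne_zero.2 (rad_pos m).ne')]
  ring

theorem alternating_sum_eq_card_mul_sum_general (C S : Type*) [CommGroup C] [IsCyclic C] [Fintype C]
    [Fintype S] [MulAction C S] (n m T : ℕ) (hn : Fintype.card C = n)
    (hT : T = m / rad m) :
    (∑ d ∈ m.divisors.filter (T ∣ ·), (-1 : ℤ) ^ bigOmega (m * d) * numPowOrbits C S d =
      (T : ℤ) * (∏ q ∈ (m / T).primeFactors, ((q : ℤ) - 1)) *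
        ∑ d ∈ n.divisors.filter (m ∣ ·), (numOrbitsOfCard C S d : ℤ)) ∧
    Nfun C S m = ∑ d ∈ n.divisors.filter (m ∣ ·), (numOrbitsOfCard C S d : ℚ) := by
  subst hn hT
  have key := sum_sign_mul_numPowOrbits (C := C) (S := S) m
  rw [Nat.card_eq_fintype_card] at key
  refine ⟨by rw [key, totient_eq_div_rad_mul_prod], ?_⟩
  rw [Nfun_eq_div_totient]
  rcases eq_or_ne m 0 with rfl | hm
  · simp [filter_eq', Fintype.card_ne_zero]
  rw [div_eq_iff (Nat.cast_ne_zero.2 (Nat.totient_pos.2 (Nat.pos_of_ne_zero hm)).ne'), mul_comm]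
  exact_mod_cast key

/-- Equation `max`: for `m ∣ n` and `T = m / rad m` (the maximal choice with
`m/T` squarefree), `∑_{T∣d∣m} (−1)^{Ω(m·d)} M_d = T · (∏_{q ∣ m/T prime} (q−1)) · ∑_{m∣d∣n} a_d`;
equivalently `N_m = ∑_{m∣d∣n} a_d`. -/
theorem alternating_sum_eq_card_mul_sum (C S : Type*) [CommGroup C] [IsCyclic C] [Fintype C]
    [Fintype S] [MulAction C S] (n m T : ℕ) (hn : Fintype.card C = n) (hm : m ∣ n)
    (hT : T = m / rad m) :
    (∑ d ∈ m.divisors.filter (T ∣ ·), (-1 : ℤ) ^ bigOmega (m * d) * numPowOrbits C S d =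
      (T : ℤ) * (∏ q ∈ (m / T).primeFactors, ((q : ℤ) - 1)) *
        ∑ d ∈ n.divisors.filter (m ∣ ·), (numOrbitsOfCard C S d : ℤ)) ∧
    Nfun C S m = ∑ d ∈ n.divisors.filter (m ∣ ·), (numOrbitsOfCard C S d : ℚ) :=
  alternating_sum_eq_card_mul_sum_general C S n m T hn hT
end

section
/- Let G be a finite group and let G₁, G₂ be subgroups of G. Then G₁ and G₂ are almost conjugate in G if and only if for every cyclic subgroup C of G, the double coset spaces C\G/G₁ and C\G/G₂ have the same cardinality. -/
/-!
Counting the set `{g ∈ G | g⁻¹ c g ∈ H}` in two ways gives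
`|Fix_{G/H}(c)| · |H| = |c^G ∩ H| · |C_G(c)|`. Both conditions force `|G₁| = |G₂|`, so each
is equivalent to `G/G₁` and `G/G₂` having the same fixed-point counts for every `c ∈ G`.
On the other side, `C\G/H` is the set of orbits of `C` on `G/H`, so by Burnside's lemma
`|C\G/H| · |C| = ∑_{c ∈ C} |Fix_{G/H}(c)|`. Fixed-point counts only depend on `⟨c⟩`, so the
sums over all cyclic `C` determine them, by induction on `|⟨c⟩|`: in the sum over `⟨c⟩` the
generators contribute a positive multiple of `|Fix(c)|`, and every other term comes from a
smaller cyclic subgroup.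
-/

/-- Subgroups `G₁`, `G₂` of `G` are almost conjugate if every conjugacy class of `G`
meets them in sets of equal cardinality. -/
def AlmostConjugate {G : Type*} [Group G] (G₁ G₂ : Subgroup G) : Prop :=
  ∀ g : G, Nat.card {x : G // IsConj g x ∧ x ∈ G₁} = Nat.card {x : G // IsConj g x ∧ x ∈ G₂}

open MulAction Finset

theorem MulAction.card_smul_mem_eq_mul {G X : Type*} [Group G] [MulAction G X] (x : X)
    (S : Set X) :
    Nat.card {g : G // g • x ∈ S} =
      Nat.card {y : X // y ∈ orbit G x ∧ y ∈ S} * Nat.card (stabilizer G x) := by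
  let e := (orbitEquivQuotientStabilizer G x).symm
  let t : Set (G ⧸ stabilizer G x) := e ⁻¹' {y | (y : X) ∈ S}
  calc Nat.card {g : G // g • x ∈ S}
      = Nat.card (QuotientGroup.mk ⁻¹' t) := rfl
    _ = Nat.card t * Nat.card (stabilizer G x) := by
      rw [Nat.card_congr (QuotientGroup.preimageMkEquivSubgroupProdSet _ t), Nat.card_prod,
        mul_comm]
    _ = _ := by
      congr 1
      exact Nat.card_congr <| (e.subtypeEquiv (q := fun y : orbit G x ↦ (y : X) ∈ S)
        fun _ ↦ Iff.rfl).trans (Equiv.subtypeSubtypeEquivSubtypeInter _ _)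

theorem QuotientGroup.mk_mem_fixedBy_iff {G : Type*} [Group G] (H : Subgroup G) (c g : G) :
    (g : G ⧸ H) ∈ fixedBy (G ⧸ H) c ↔ g⁻¹ * c * g ∈ H := by
  change ((c * g : G) : G ⧸ H) = g ↔ _
  rw [QuotientGroup.eq, ← H.inv_mem_iff]
  group

theorem Subgroup.card_fixedBy_quotient_mul_card {G : Type*} [Group G] (H : Subgroup G) (c : G) :
    Nat.card (fixedBy (G ⧸ H) c) * Nat.card H =
      Nat.card {x : G // IsConj c x ∧ x ∈ H} * Nat.card (stabilizer (ConjAct G) c) := by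
  have conj : QuotientGroup.mk ⁻¹' fixedBy (G ⧸ H) c ≃ {g : ConjAct G // g • c ∈ (H : Set G)} :=
    (Equiv.inv G).trans ConjAct.toConjAct.toEquiv |>.subtypeEquiv fun g ↦ by
      change _ ↔ ConjAct.toConjAct g⁻¹ • c ∈ H
      rw [Set.mem_preimage, QuotientGroup.mk_mem_fixedBy_iff, ConjAct.toConjAct_smul, inv_inv]
  rw [mul_comm, ← Nat.card_prod,
    ← Nat.card_congr (QuotientGroup.preimageMkEquivSubgroupProdSet H _), Nat.card_congr conj,
    card_smul_mem_eq_mul]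
  congr 1
  exact Nat.card_congr <| Equiv.subtypeEquivRight fun x ↦ by
    rw [ConjAct.mem_orbit_conjAct, isConj_comm]; rfl

theorem Subgroup.card_eq_sum_conjClasses {G : Type*} [Group G] [Fintype (ConjClasses G)]
    [Finite G] (H : Subgroup G) :
    Nat.card H = ∑ K : ConjClasses G, Nat.card {x : G // ConjClasses.mk x = K ∧ x ∈ H} := by
  rw [← Nat.card_sigma]
  exact Nat.card_congr <| (Equiv.sigmaFiberEquiv fun x : H ↦ ConjClasses.mk (x : G)).symm.trans <|
    Equiv.sigmaCongrRight fun K ↦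
      (Equiv.subtypeSubtypeEquivSubtypeInter (· ∈ H) (ConjClasses.mk · = K)).trans
        (Equiv.subtypeEquivRight fun _ ↦ and_comm)

theorem AlmostConjugate.card_eq {G : Type*} [Group G] [Finite G] {G₁ G₂ : Subgroup G}
    (h : AlmostConjugate G₁ G₂) : Nat.card G₁ = Nat.card G₂ := by
  classical
  have := Fintype.ofFinite G
  have classCard (H : Subgroup G) (g : G) :
      Nat.card {x : G // ConjClasses.mk x = ConjClasses.mk g ∧ x ∈ H} =
        Nat.card {x : G // IsConj g x ∧ x ∈ H} :=
    Nat.card_congr <| Equiv.subtypeEquivRight fun x ↦ by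
      rw [ConjClasses.mk_eq_mk_iff_isConj, isConj_comm]
  rw [G₁.card_eq_sum_conjClasses, G₂.card_eq_sum_conjClasses]
  refine Finset.sum_congr rfl fun K _ ↦ ?_
  obtain ⟨g, rfl⟩ := ConjClasses.mk_surjective K
  rw [classCard, classCard, h g]

theorem almostConjugate_iff_card_fixedBy_eq {G : Type*} [Group G] [Finite G]
    {G₁ G₂ : Subgroup G} :
    AlmostConjugate G₁ G₂ ↔
      ∀ c : G, Nat.card (fixedBy (G ⧸ G₁) c) = Nat.card (fixedBy (G ⧸ G₂) c) := by
  have : Finite (ConjAct G) := ‹Finite G›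
  have cancel {H₁ H₂ : Subgroup G} (hcard : Nat.card H₁ = Nat.card H₂) (c : G) :
      Nat.card (fixedBy (G ⧸ H₁) c) = Nat.card (fixedBy (G ⧸ H₂) c) ↔
        Nat.card {x : G // IsConj c x ∧ x ∈ H₁} = Nat.card {x : G // IsConj c x ∧ x ∈ H₂} := by
    rw [← Nat.mul_left_inj (Nat.card_pos (α := H₁)).ne', H₁.card_fixedBy_quotient_mul_card,
      hcard, H₂.card_fixedBy_quotient_mul_card, Nat.mul_left_inj Nat.card_pos.ne']
  refine ⟨fun h c ↦ (cancel h.card_eq c).mpr (h c), fun h ↦ ?_⟩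
  have hindex : Nat.card (G ⧸ G₁) = Nat.card (G ⧸ G₂) := by
    simpa [fixedBy_one_eq_univ] using h 1
  have hcard : Nat.card G₁ = Nat.card G₂ := by
    have := G₁.card_eq_card_quotient_mul_card_subgroup
    rwa [G₂.card_eq_card_quotient_mul_card_subgroup, hindex,
      Nat.mul_right_inj Nat.card_pos.ne', eq_comm] at this
  exact fun c ↦ (cancel hcard c).mp (h c)

noncomputable def DoubleCoset.quotientEquivOrbitRelQuotient {G : Type*} [Group G]
    (C H : Subgroup G) :
    DoubleCoset.Quotient (C : Set G) (H : Set G) ≃ orbitRel.Quotient C (G ⧸ H) :=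
  have rel_iff_orbitRel (a b : G) :
      DoubleCoset.setoid (C : Set G) (H : Set G) a b ↔
        (⟦(a : G ⧸ H)⟧ : orbitRel.Quotient C (G ⧸ H)) = ⟦(b : G ⧸ H)⟧ := by
    rw [DoubleCoset.rel_iff, Quotient.eq, orbitRel_apply, mem_orbit_iff]
    constructor
    · rintro ⟨x, hx, y, hy, rfl⟩
      refine ⟨⟨x⁻¹, C.inv_mem hx⟩, ?_⟩
      change ((x⁻¹ * (x * a * y) : G) : G ⧸ H) = a
      rw [QuotientGroup.eq]
      simpa [mul_assoc] using H.inv_mem hy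
    · rintro ⟨⟨c, hc⟩, hcb⟩
      change ((c * b : G) : G ⧸ H) = a at hcb
      rw [QuotientGroup.eq] at hcb
      exact ⟨c⁻¹, C.inv_mem hc, _, H.inv_mem hcb, by group⟩
  (Quotient.congrRight rel_iff_orbitRel).trans <|
    Setoid.quotientKerEquivOfSurjective _ <|
      (Quotient.mk''_surjective).comp QuotientGroup.mk_surjective

theorem DoubleCoset.sum_card_fixedBy_quotient {G : Type*} [Group G] [Finite G]
    (C H : Subgroup G) [Fintype C] :
    ∑ c : C, Nat.card (fixedBy (G ⧸ H) (c : G)) =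
      Nat.card (DoubleCoset.Quotient (C : Set G) (H : Set G)) * Nat.card C := by
  rw [Nat.card_congr (quotientEquivOrbitRelQuotient C H), ← Nat.card_prod,
    ← Nat.card_congr (sigmaFixedByEquivOrbitsProdGroup C (G ⧸ H)), Nat.card_sigma]
  rfl

theorem MulAction.fixedBy_eq_of_zpowers_eq {G X : Type*} [Group G] [MulAction G X] {x y : G}
    (h : Subgroup.zpowers x = Subgroup.zpowers y) : fixedBy X x = fixedBy X y := by
  have anti {a b : G} (hab : a ∈ Subgroup.zpowers b) : fixedBy X b ⊆ fixedBy X a := by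
    obtain ⟨k, rfl⟩ := hab
    exact fixedBy_subset_fixedBy_zpow X b k
  exact (anti (h ▸ Subgroup.mem_zpowers y)).antisymm (anti (h ▸ Subgroup.mem_zpowers x))

theorem eq_of_sum_zpowers_eq {G : Type*} [Group G] [Fintype G] {f₁ f₂ : G → ℕ}
    (hf₁ : ∀ x y, Subgroup.zpowers x = Subgroup.zpowers y → f₁ x = f₁ y)
    (hf₂ : ∀ x y, Subgroup.zpowers x = Subgroup.zpowers y → f₂ x = f₂ y)
    (h : ∀ c : G, ∑ x : Subgroup.zpowers c, f₁ x = ∑ x : Subgroup.zpowers c, f₂ x) :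
    f₁ = f₂ := by
  classical
  suffices ∀ n, ∀ c : G, Nat.card (Subgroup.zpowers c) = n → f₁ c = f₂ c from
    funext fun c ↦ this _ c rfl
  intro n
  induction n using Nat.strong_induction_on with | _ n ih => ?_
  rintro c rfl
  let generates (x : Subgroup.zpowers c) : Prop := Subgroup.zpowers (x : G) = Subgroup.zpowers c
  have split (f : G → ℕ) (hf : ∀ x y, Subgroup.zpowers x = Subgroup.zpowers y → f x = f y) :
      ∑ x : Subgroup.zpowers c, f x =
        #{x | generates x} * f c + ∑ x with ¬ generates x, f x := by
    rw [← Finset.sum_filter_add_sum_filter_not _ generates,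
      Finset.sum_congr rfl fun x hx ↦ hf _ _ (Finset.mem_filter.mp hx).2, Finset.sum_const,
      smul_eq_mul]
  have proper : ∑ x with ¬ generates x, f₁ x = ∑ x with ¬ generates x, f₂ x := by
    refine Finset.sum_congr rfl fun x hx ↦ ih _ ?_ x rfl
    by_contra! hle
    exact (Finset.mem_filter.mp hx).2 <|
      Subgroup.eq_of_le_of_card_ge (Subgroup.zpowers_le.mpr x.2) hle
  have hgen : 0 < #{x | generates x} :=
    Finset.card_pos.mpr ⟨⟨c, Subgroup.mem_zpowers c⟩, Finset.mem_filter.mpr ⟨mem_univ _, rfl⟩⟩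
  have := h c
  rw [split f₁ hf₁, split f₂ hf₂, proper] at this
  exact Nat.eq_of_mul_eq_mul_left hgen (Nat.add_right_cancel this)

theorem card_fixedBy_eq_iff_card_doubleCoset_eq {G : Type*} [Group G] [Finite G]
    {G₁ G₂ : Subgroup G} :
    (∀ c : G, Nat.card (fixedBy (G ⧸ G₁) c) = Nat.card (fixedBy (G ⧸ G₂) c)) ↔
      ∀ C : Subgroup G, IsCyclic C →
        Nat.card (DoubleCoset.Quotient (C : Set G) (G₁ : Set G)) =
          Nat.card (DoubleCoset.Quotient (C : Set G) (G₂ : Set G)) := by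
  have := Fintype.ofFinite G
  have burnside (C : Subgroup G) [Fintype C] {H₁ H₂ : Subgroup G} :
      ∑ c : C, Nat.card (fixedBy (G ⧸ H₁) (c : G)) =
          ∑ c : C, Nat.card (fixedBy (G ⧸ H₂) (c : G)) ↔
        Nat.card (DoubleCoset.Quotient (C : Set G) (H₁ : Set G)) =
          Nat.card (DoubleCoset.Quotient (C : Set G) (H₂ : Set G)) := by
    rw [DoubleCoset.sum_card_fixedBy_quotient, DoubleCoset.sum_card_fixedBy_quotient,
      Nat.mul_left_inj Nat.card_pos.ne']
  refine ⟨fun h C _ ↦ have := Fintype.ofFinite C; (burnside C).mp (by simp only [h]), fun h ↦ ?_⟩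
  have invariant (H : Subgroup G) (x y : G) (hxy : Subgroup.zpowers x = Subgroup.zpowers y) :
      Nat.card (fixedBy (G ⧸ H) x) = Nat.card (fixedBy (G ⧸ H) y) := by
    rw [fixedBy_eq_of_zpowers_eq hxy]
  exact congrFun <| eq_of_sum_zpowers_eq (invariant G₁) (invariant G₂) fun c ↦
    (burnside _).mpr (h _ inferInstance)

/-- subgroups `G₁` and `G₂` of a finite group `G` are almost conjugate if and
only if for every cyclic subgroup `C` of `G` the double coset spaces `C\G/G₁` and `C\G/G₂`
have the same cardinality. -/
theorem almostConjugate_iff_doset_card (G : Type*) [Group G] [Finite G]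
    (G₁ G₂ : Subgroup G) :
    AlmostConjugate G₁ G₂ ↔
      ∀ C : Subgroup G, IsCyclic C →
        Nat.card (DoubleCoset.Quotient (C : Set G) (G₁ : Set G)) =
          Nat.card (DoubleCoset.Quotient (C : Set G) (G₂ : Set G)) :=
  almostConjugate_iff_card_fixedBy_eq.trans card_fixedBy_eq_iff_card_doubleCoset_eq
end

section
/- Let F = ℚ(∛2) (the field obtained by adjoining to ℚ the real cube root of 2) and let K be the splitting field of X³ − 2 over ℚ, which is the Galois closure of F over ℚ. Then S_F(2) = {1}, S_K(2) = {2}, and in particular lcm(S_F(2)) = 1 ≠ 2 = lcm(S_K(2)). Consequently, F and K are number fields with the same Galois closure over ℚ whose splitting-type lcm's differ at the prime 2. -/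
open NumberField

/-- The splitting type `S_F(p)`: the multiset of residual degrees of the primes of `𝓞 F`
lying above `p`. -/
noncomputable def splittingType (F : Type*) [Field F] [NumberField F] (p : ℕ) : Multiset ℕ :=
  letI := Classical.decEq (Ideal (𝓞 F))
  (UniqueFactorizationMonoid.normalizedFactors (Ideal.span {(p : 𝓞 F)})).dedup.map
    fun P => Ideal.inertiaDeg' (Ideal.span {(p : ℤ)}) P

/-!
Write `a = ∛2`. In any number field `L` containing `a`, the ideal `(2)` is the cube of `(a)`, and
`N(a)³ = 2^[L:ℚ]`. In `F` (degree 3) this gives `N(a) = 2`, so `(a)` is a prime of residue degree 1.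
In `K` (degree at most `3! = 6`) it gives `N(a) ≤ 4`; on the other hand `K` contains a primitive
cube root of unity, whose reduction is a root of `X² + X + 1` in every residue field of
characteristic 2, so every prime above 2 has residue degree at least 2. Hence `(a)` is the only
prime above 2 in `K`, and its residue degree is 2.
-/

open Ideal Polynomial Module IntermediateField UniqueFactorizationMonoid

lemma rat_pow_three_ne_two (b : ℚ) : b ^ 3 ≠ 2 := by
  intro h
  have hint : IsIntegral ℤ b := IsIntegral.of_pow three_pos (h ▸ isIntegral_natCast 2)
  obtain ⟨y, rfl⟩ := IsIntegrallyClosed.isIntegral_iff.mp hint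
  have hy : y ^ 3 = 2 := by rw [eq_intCast] at h; exact_mod_cast h
  have hpos : 0 < y := by
    by_contra! h'
    nlinarith [sq_nonneg y]
  have hlt : y < 2 := by
    by_contra! h'
    nlinarith [sq_nonneg y]
  obtain rfl : y = 1 := by omega
  norm_num at hy

lemma X_pow_three_sub_two_eq_X_pow_sub_C : (X ^ 3 - 2 : ℚ[X]) = X ^ 3 - C 2 := by
  rw [map_ofNat]

lemma irreducible_X_pow_three_sub_two : Irreducible (X ^ 3 - 2 : ℚ[X]) := by
  rw [X_pow_three_sub_two_eq_X_pow_sub_C]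
  exact X_pow_sub_C_irreducible_of_prime Nat.prime_three rat_pow_three_ne_two

lemma separable_X_pow_three_sub_two : (X ^ 3 - 2 : ℚ[X]).Separable := by
  rw [X_pow_three_sub_two_eq_X_pow_sub_C]
  exact separable_X_pow_sub_C _ (by norm_num) two_ne_zero

lemma monic_X_pow_three_sub_two : (X ^ 3 - 2 : ℚ[X]).Monic := by
  rw [X_pow_three_sub_two_eq_X_pow_sub_C]
  exact monic_X_pow_sub_C _ three_ne_zero

lemma natDegree_X_pow_three_sub_two : (X ^ 3 - 2 : ℚ[X]).natDegree = 3 := by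
  rw [X_pow_three_sub_two_eq_X_pow_sub_C, natDegree_X_pow_sub_C]

lemma Polynomial.IsSplittingField.finrank_le_factorial {k K : Type*} [Field k] [Field K]
    [Algebra k K] (f : k[X]) [IsSplittingField k K f] (hf : f.Separable) :
    finrank k K ≤ f.natDegree.factorial := by
  have : Fact ((f.map (algebraMap k K)).Splits) := ⟨IsSplittingField.splits K f⟩
  calc finrank k K = finrank k f.SplittingField :=
        (IsSplittingField.algEquiv K f).toLinearEquiv.finrank_eq
    _ = Nat.card f.Gal := (Gal.card_of_separable hf).symm
    _ ≤ Nat.card (Equiv.Perm (f.rootSet K)) :=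
        Nat.card_le_card_of_injective _ (Gal.galActionHom_injective f K)
    _ = f.natDegree.factorial := by
        rw [Nat.card_perm, Nat.card_eq_fintype_card,
          card_rootSet_eq_natDegree hf (IsSplittingField.splits K f)]

lemma normalClosure_adjoin_simple_eq_top {k K : Type*} [Field k] [Field K] [Algebra k K]
    {f : k[X]} [hK : IsSplittingField k K f] {α : K} (hα : minpoly k α = f) :
    normalClosure k k⟮α⟯ K = ⊤ := by
  have : Normal k K := Normal.of_isSplittingField f
  rw [normalClosure_eq_iSup_adjoin, eq_top_iff,
    ← (isSplittingField_iff_intermediateField.mp hK).2]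
  refine le_trans ?_ (le_iSup _ ⟨α, mem_adjoin_simple_self k α⟩)
  rw [minpoly_eq, hα]

lemma exists_ne_pow_three_eq_two {K : Type*} [Field K] [Algebra ℚ K]
    [IsSplittingField ℚ K (X ^ 3 - 2)] (α : K) : ∃ β : K, β ^ 3 = 2 ∧ β ≠ α := by
  have hcard : 2 < Fintype.card ((X ^ 3 - 2 : ℚ[X]).rootSet K) := by
    rw [card_rootSet_eq_natDegree separable_X_pow_three_sub_two (IsSplittingField.splits K _),
      natDegree_X_pow_three_sub_two]
    norm_num
  obtain ⟨β₁, β₂, -, hne, -⟩ := Fintype.two_lt_card_iff.mp hcard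
  have hroot (β : (X ^ 3 - 2 : ℚ[X]).rootSet K) : (β : K) ^ 3 = 2 := by
    simpa [sub_eq_zero, map_ofNat] using (mem_rootSet.mp β.2).2
  by_cases h : (β₁ : K) = α
  · exact ⟨β₂, hroot β₂, fun h' => hne (Subtype.ext (h.trans h'.symm))⟩
  · exact ⟨β₁, hroot β₁, h⟩

lemma sq_add_self_add_one_eq_zero_of_pow_three_eq {K : Type*} [Field K] {α β : K}
    (hne : β ≠ α) (h : β ^ 3 = α ^ 3) : (β / α) ^ 2 + β / α + 1 = 0 := by
  have hα : α ≠ 0 := by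
    rintro rfl
    exact hne (pow_eq_zero_iff three_ne_zero |>.mp (h.trans (zero_pow three_ne_zero)))
  have h1 : β / α - 1 ≠ 0 := sub_ne_zero.mpr fun h' => hne ((div_eq_one_iff_eq hα).mp h')
  refine (mul_eq_zero.mp ?_).resolve_left h1
  field_simp
  linear_combination h

lemma two_lt_natCard_of_sq_add_self_add_one_eq_zero {A : Type*} [CommRing A] [Nontrivial A]
    [Finite A] (h2 : (2 : A) = 0) {w : A} (hw : w ^ 2 + w + 1 = 0) : 2 < Nat.card A := by
  have := Fintype.ofFinite A
  rw [Nat.card_eq_fintype_card, Fintype.two_lt_card_iff]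
  refine ⟨0, 1, w, zero_ne_one, ?_, ?_⟩
  · rintro rfl
    simp at hw
  · rintro rfl
    exact one_ne_zero (by linear_combination hw - h2)

lemma Ideal.eq_of_le_of_absNorm_eq {S : Type*} [CommRing S] [IsDedekindDomain S]
    [Module.Free ℤ S] {I J : Ideal S} (hIJ : I ≤ J) (h : absNorm I = absNorm J)
    (h0 : absNorm I ≠ 0) : I = J := by
  obtain ⟨K, rfl⟩ := dvd_iff_le.mpr hIJ
  have hK : absNorm K = 1 := by
    rw [map_mul] at h h0
    exact (Nat.mul_eq_left (left_ne_zero_of_mul h0)).mp h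
  rw [absNorm_eq_one_iff.mp hK, mul_top]

lemma exists_ringOfIntegers_pow_eq_natCast {L : Type*} [Field L] {α : L} {n m : ℕ} (hn : n ≠ 0)
    (hα : α ^ n = m) : ∃ x : 𝓞 L, (x : L) = α ∧ x ^ n = m :=
  have hint : IsIntegral ℤ α :=
    IsIntegral.of_pow (Nat.pos_of_ne_zero hn) (hα ▸ isIntegral_natCast m)
  ⟨⟨α, hint⟩, rfl, RingOfIntegers.ext (by push_cast; exact hα)⟩

lemma liesOver_span_natCast_of_mem {L : Type*} [Field L] {p : ℕ} (hp : p.Prime)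
    {P : Ideal (𝓞 L)} [P.IsMaximal] (hpP : (p : 𝓞 L) ∈ P) : P.LiesOver (span {(p : ℤ)}) :=
  (liesOver_span_iff IsPrime.ne_top' (Nat.prime_iff_prime_int.mp hp)).mpr (by simpa using hpP)

section SplittingType

variable {L : Type*} [Field L] [NumberField L] {p : ℕ}

lemma absNorm_eq_pow_inertiaDeg'_of_natCast_mem (hp : p.Prime) {P : Ideal (𝓞 L)}
    [P.IsMaximal] (hpP : (p : 𝓞 L) ∈ P) :
    absNorm P = p ^ inertiaDeg' (span {(p : ℤ)}) P :=
  have := liesOver_span_natCast_of_mem hp hpP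
  absNorm_eq_pow_inertiaDeg' P hp

lemma splittingType_eq_singleton_of_span_eq_pow {P : Ideal (𝓞 L)} (hP : Prime P) {e : ℕ}
    (he : e ≠ 0) (h : span {(p : 𝓞 L)} = P ^ e) :
    splittingType L p = {inertiaDeg' (span {(p : ℤ)}) P} := by
  classical
  rw [splittingType, h, normalizedFactors_pow, normalizedFactors_irreducible hP.irreducible,
    normalize_eq, Multiset.dedup_nsmul he, Multiset.dedup_singleton, Multiset.map_singleton]

theorem splittingType_eq_singleton_of_pow_eq_natCast (hp : p.Prime) {x : 𝓞 L} {e f : ℕ}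
    (hx : x ^ e = p) (hdeg : finrank ℚ L ≤ e * f)
    (hf : ∀ P : Ideal (𝓞 L), P.IsMaximal → (p : 𝓞 L) ∈ P → f ≤ inertiaDeg' (span {(p : ℤ)}) P) :
    splittingType L p = {f} := by
  have hnorm : absNorm (span {x}) ^ e = p ^ finrank ℚ L := by
    rw [← map_pow, span_singleton_pow, hx, absNorm_span_natCast, RingOfIntegers.rank]
  have hgt : 1 < p ^ finrank ℚ L := Nat.one_lt_pow finrank_pos.ne' hp.one_lt
  have he : e ≠ 0 := by
    rintro rfl
    rw [pow_zero] at hnorm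
    omega
  have hx0 : absNorm (span {x}) ≠ 0 := by
    intro h0
    rw [h0, zero_pow he] at hnorm
    omega
  obtain ⟨P, hPmax, hxP⟩ := exists_le_maximal (span {x}) fun h => by
    rw [h, absNorm_top, one_pow] at hnorm
    omega
  have hpP : (p : 𝓞 L) ∈ P :=
    hx ▸ P.pow_mem_of_mem (hxP (mem_span_singleton_self x)) e (Nat.pos_of_ne_zero he)
  have hle : absNorm (span {x}) ≤ p ^ f := by
    refine (Nat.pow_le_pow_iff_left he).mp ?_
    rw [hnorm, ← pow_mul, mul_comm f]
    exact Nat.pow_le_pow_right hp.pos hdeg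
  have hge : p ^ f ≤ absNorm P := by
    rw [absNorm_eq_pow_inertiaDeg'_of_natCast_mem hp hpP]
    exact Nat.pow_le_pow_right hp.pos (hf P hPmax hpP)
  have hxP_eq : span {x} = P := eq_of_le_of_absNorm_eq hxP
    (le_antisymm (hle.trans hge) (Nat.le_of_dvd (Nat.pos_of_ne_zero hx0)
      (absNorm_dvd_absNorm_of_le hxP))) hx0
  subst hxP_eq
  have hinertia : inertiaDeg' (span {(p : ℤ)}) (span {x}) = f := by
    refine Nat.pow_right_injective hp.two_le ?_
    simp only [← absNorm_eq_pow_inertiaDeg'_of_natCast_mem hp hpP]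
    exact le_antisymm hle hge
  rw [← hinertia]
  refine splittingType_eq_singleton_of_span_eq_pow ?_ he (by rw [span_singleton_pow, hx])
  exact prime_of_isPrime (mt absNorm_eq_zero_iff.mpr hx0) hPmax.isPrime

lemma two_le_inertiaDeg'_of_sq_add_self_add_one_eq_zero {ζ : L} (hζ : ζ ^ 2 + ζ + 1 = 0)
    (P : Ideal (𝓞 L)) [P.IsMaximal] (h2P : ((2 : ℕ) : 𝓞 L) ∈ P) :
    2 ≤ inertiaDeg' (span {((2 : ℕ) : ℤ)}) P := by
  -- `ζ ^ 3 = 1`, so `ζ` is integral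
  obtain ⟨z, rfl, -⟩ := exists_ringOfIntegers_pow_eq_natCast (m := 1) three_ne_zero
    (by push_cast; linear_combination (ζ - 1) * hζ)
  have hz : z ^ 2 + z + 1 = 0 := RingOfIntegers.ext (by push_cast; exact hζ)
  have hcard : 2 < Nat.card (𝓞 L ⧸ P) := by
    refine two_lt_natCard_of_sq_add_self_add_one_eq_zero (w := Ideal.Quotient.mk P z) ?_ ?_
    · rw [← map_ofNat (Ideal.Quotient.mk P) 2]
      exact Quotient.eq_zero_iff_mem.mpr (by simpa using h2P)
    · simpa using congrArg (Ideal.Quotient.mk P) hz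
  have hnorm := absNorm_eq_pow_inertiaDeg'_of_natCast_mem Nat.prime_two h2P
  rw [absNorm_apply, Submodule.cardQuot_apply] at hnorm
  by_contra! h
  interval_cases inertiaDeg' (span {((2 : ℕ) : ℤ)}) P <;> omega

lemma splittingType_two_eq_singleton_one (hdeg : finrank ℚ L ≤ 3) {α : L} (hα : α ^ 3 = 2) :
    splittingType L 2 = {1} := by
  obtain ⟨x, -, hx⟩ := exists_ringOfIntegers_pow_eq_natCast (m := 2) three_ne_zero (by simpa)
  refine splittingType_eq_singleton_of_pow_eq_natCast Nat.prime_two hx hdeg fun P _ h2P => ?_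
  have := liesOver_span_natCast_of_mem Nat.prime_two h2P
  exact inertiaDeg'_pos _ _

lemma splittingType_two_eq_singleton_two (hdeg : finrank ℚ L ≤ 6) {α ζ : L} (hα : α ^ 3 = 2)
    (hζ : ζ ^ 2 + ζ + 1 = 0) : splittingType L 2 = {2} := by
  obtain ⟨x, -, hx⟩ := exists_ringOfIntegers_pow_eq_natCast (m := 2) three_ne_zero (by simpa)
  exact splittingType_eq_singleton_of_pow_eq_natCast Nat.prime_two hx hdeg fun P _ h2P =>
    two_le_inertiaDeg'_of_sq_add_self_add_one_eq_zero hζ P h2P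

end SplittingType

open Polynomial in
/-- for `F = ℚ(∛2)` inside the splitting field `K` of `X³ - 2` over `ℚ`
(the Galois closure of `F`), one has `S_F(2) = {1}`, `S_K(2) = {2}`, hence
`lcm S_F(2) = 1 ≠ 2 = lcm S_K(2)`: ultra-coarsely equivalent fields (same Galois closure)
whose splitting-type lcm'\''s differ at `2`. -/
theorem splittingType_cubeRootTwo_ne_galoisClosure_at_two
    (K : Type*) [Field K] [NumberField K] [IsSplittingField ℚ K (X ^ 3 - 2)]
    (α : K) (hα : α ^ 3 = 2) (F : IntermediateField ℚ K)
    (hF : F = IntermediateField.adjoin ℚ {α}) :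
    splittingType F 2 = {1} ∧ splittingType K 2 = {2} ∧
      (splittingType F 2).lcm = 1 ∧ (splittingType K 2).lcm = 2 ∧
      (splittingType F 2).lcm ≠ (splittingType K 2).lcm ∧
      IsGalois ℚ K ∧ IntermediateField.normalClosure ℚ F K = ⊤ := by
  subst hF
  have hmin : minpoly ℚ α = X ^ 3 - 2 :=
    (minpoly.eq_of_irreducible_of_monic irreducible_X_pow_three_sub_two (by simp [hα, map_ofNat])
      monic_X_pow_three_sub_two).symm
  have hS_F : splittingType ℚ⟮α⟯ 2 = {1} := by
    refine splittingType_two_eq_singleton_one (α := ⟨α, mem_adjoin_simple_self ℚ α⟩) ?_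
      (Subtype.ext hα)
    rw [adjoin.finrank (.of_finite ℚ α), hmin, natDegree_X_pow_three_sub_two]
  obtain ⟨β, hβ, hβα⟩ := exists_ne_pow_three_eq_two α
  have hS_K : splittingType K 2 = {2} := by
    refine splittingType_two_eq_singleton_two ?_ hα
      (sq_add_self_add_one_eq_zero_of_pow_three_eq hβα (hβ.trans hα.symm))
    simpa [natDegree_X_pow_three_sub_two, Nat.factorial] using
      IsSplittingField.finrank_le_factorial (X ^ 3 - 2 : ℚ[X]) separable_X_pow_three_sub_two
  exact ⟨hS_F, hS_K, by simp [hS_F], by simp [hS_K], by simp [hS_F, hS_K],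
    .of_separable_splitting_field separable_X_pow_three_sub_two,
    normalClosure_adjoin_simple_eq_top hmin⟩
end
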